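/- There exists a Borel measurable function ℓ : X^ℕ → X such that for every sequence (x_n) in X whose closure of range is compact, ℓ((x_n)) is a limit point (cluster point) of the sequence (x_n). -/

import Mathlib

/-!
Fix a dense sequence `d` in `X`. Starting from all indices, at stage `n` pick the least `k` such
that infinitely many of the remaining indices `i` have `u i` within `2⁻ⁿ` of `d k`, and keep
only those. Compactness of the closure of the range makes every stage succeed (finitely many
balls about points of `d` cover it), the chosen centers form a Cauchy sequence because consecutive
index sets share an index, and its limit is a cluster point of `u`. Every choice is a least
natural number subject to conditions built countably from closed balls, so each center, and
hence the limit, depends measurably on `u`.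
-/

open Filter Metric Set Topology

namespace LimitPointSelection

section Refinement

variable {X : Type*} [PseudoMetricSpace X] (d : ℕ → X) (r : ℝ)

open Classical in
-- Emptying the index set on failure freezes the center at all later stages.
noncomputable def shrink (u : ℕ → X) (k : ℕ) (p : ℕ × Set ℕ) : ℕ × Set ℕ :=
  if (p.2 ∩ u ⁻¹' closedBall (d k) r).Infinite then (k, p.2 ∩ u ⁻¹' closedBall (d k) r)
  else (p.1, ∅)

theorem exists_infinite_or_forall_not_infinite (u : ℕ → X) (S : Set ℕ) :
    ∃ k, (S ∩ u ⁻¹' closedBall (d k) r).Infinite ∨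
      ∀ j, ¬(S ∩ u ⁻¹' closedBall (d j) r).Infinite :=
  (exists_or_forall_not _).elim (fun ⟨k, hk⟩ => ⟨k, .inl hk⟩) fun h => ⟨0, .inr h⟩

open Classical in
/-- Shrink at the least `k` for which `shrink` succeeds, or at `0` if there is none; the choice
is written as a total `Nat.find` so that `Measurable.find` applies. -/
noncomputable def refineStep (u : ℕ → X) (p : ℕ × Set ℕ) : ℕ × Set ℕ :=
  shrink d r u (Nat.find (exists_infinite_or_forall_not_infinite d r u p.2)) p

variable {d r}

theorem refineStep_snd_subset (u : ℕ → X) (p : ℕ × Set ℕ) :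
    (refineStep d r u p).2 ⊆ p.2 := by
  unfold refineStep shrink
  split_ifs
  exacts [inter_subset_left, empty_subset _]

theorem dist_le_of_mem_refineStep {u : ℕ → X} {p : ℕ × Set ℕ} {i : ℕ}
    (hi : i ∈ (refineStep d r u p).2) : dist (u i) (d (refineStep d r u p).1) ≤ r := by
  unfold refineStep shrink at *
  split_ifs at hi ⊢
  exacts [hi.2, hi.elim]

theorem refineStep_snd_infinite_or_eq (u : ℕ → X) (p : ℕ × Set ℕ) :
    (refineStep d r u p).2.Infinite ∨ refineStep d r u p = (p.1, ∅) := by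
  unfold refineStep shrink
  split_ifs with h
  exacts [.inl h, .inr rfl]

open Classical in
theorem refineStep_snd_infinite {u : ℕ → X} {p : ℕ × Set ℕ}
    (h : ∃ k, (p.2 ∩ u ⁻¹' closedBall (d k) r).Infinite) :
    (refineStep d r u p).2.Infinite := by
  obtain ⟨k, hk⟩ := h
  have hfind := (Nat.find_spec (exists_infinite_or_forall_not_infinite d r u p.2)).resolve_right
    fun hall => hall k hk
  unfold refineStep shrink
  rwa [if_pos hfind]

theorem exists_infinite_inter_preimage_closedBall (hd : DenseRange d) {u : ℕ → X}
    (hu : IsCompact (closure (range u))) {S : Set ℕ} (hS : S.Infinite) (hr : 0 < r) :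
    ∃ k, (S ∩ u ⁻¹' closedBall (d k) r).Infinite := by
  obtain ⟨t, ht⟩ := hu.elim_finite_subcover (fun k => ball (d k) r) (fun _ => isOpen_ball)
    fun x _ => mem_iUnion.2 <| by simpa [dist_comm] using hd.exists_dist_lt x hr
  by_contra! hfin
  refine hS ((t.finite_toSet.biUnion fun k _ => hfin k).subset fun i hi => ?_)
  obtain ⟨k, hk, hik⟩ := mem_iUnion₂.1 (ht (subset_closure (mem_range_self i)))
  exact mem_biUnion hk ⟨hi, ball_subset_closedBall hik⟩

end Refinement

section Centers

variable {X : Type*} [PseudoMetricSpace X] {d : ℕ → X} {u : ℕ → X}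

-- A state is the index in `d` of the current center and the set of indices still retained.
variable (d u) in
noncomputable def clusterState : ℕ → ℕ × Set ℕ
  | 0 => (0, univ)
  | n + 1 => refineStep d ((1 / 2) ^ n) u (clusterState n)

variable (d u) in
noncomputable def clusterApprox (n : ℕ) : X := d (clusterState d u (n + 1)).1

theorem dist_clusterApprox_le {n i : ℕ} (hi : i ∈ (clusterState d u (n + 1)).2) :
    dist (u i) (clusterApprox d u n) ≤ (1 / 2) ^ n :=
  dist_le_of_mem_refineStep hi

theorem dist_clusterApprox_succ_le (n : ℕ) :
    dist (clusterApprox d u n) (clusterApprox d u (n + 1)) ≤ 2 * (1 / 2) ^ n := by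
  rcases refineStep_snd_infinite_or_eq u (clusterState d u (n + 1)) with h | h
  · obtain ⟨i, hi⟩ := h.nonempty
    calc dist (clusterApprox d u n) (clusterApprox d u (n + 1))
        ≤ dist (u i) (clusterApprox d u n) + dist (u i) (clusterApprox d u (n + 1)) :=
          dist_triangle_left _ _ _
      _ ≤ (1 / 2) ^ n + (1 / 2) ^ (n + 1) :=
          add_le_add (dist_clusterApprox_le (refineStep_snd_subset _ _ hi))
            (dist_clusterApprox_le hi)
      _ ≤ 2 * (1 / 2) ^ n := by rw [pow_succ]; linarith [pow_pos (one_half_pos (α := ℝ)) n]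
  · have hstay : clusterApprox d u (n + 1) = clusterApprox d u n :=
      (congrArg (fun p : ℕ × Set ℕ => d p.1) h :)
    rw [hstay, dist_self]
    positivity

theorem cauchySeq_clusterApprox : CauchySeq (clusterApprox d u) :=
  cauchySeq_of_le_geometric (1 / 2) 2 (by norm_num) dist_clusterApprox_succ_le

theorem clusterState_snd_infinite (hd : DenseRange d) (hu : IsCompact (closure (range u)))
    (n : ℕ) : (clusterState d u n).2.Infinite := by
  induction n with
  | zero => exact infinite_univ
  | succ n ih =>
    exact refineStep_snd_infinite
      (exists_infinite_inter_preimage_closedBall hd hu ih (by positivity))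

theorem mapClusterPt_of_frequently_dist_le {ι : Type*} {l : Filter ι} {u : ι → X}
    {y : ℕ → X} {x : X} {r : ℕ → ℝ} (hy : Tendsto y atTop (𝓝 x))
    (hr : Tendsto r atTop (𝓝 0)) (h : ∀ n, ∃ᶠ i in l, dist (u i) (y n) ≤ r n) :
    MapClusterPt x l u := by
  refine mapClusterPt_iff_frequently.2 fun s hs => ?_
  obtain ⟨ε, hε, hεs⟩ := Metric.mem_nhds_iff.1 hs
  obtain ⟨n, hyn, hrn⟩ := ((tendsto_nhds.1 hy (ε / 2) (half_pos hε)).and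
    (hr.eventually (gt_mem_nhds (half_pos hε)))).exists
  refine (h n).mono fun i hi => hεs ?_
  calc dist (u i) x ≤ dist (u i) (y n) + dist (y n) x := dist_triangle _ _ _
    _ < ε := by linarith

theorem mapClusterPt_limUnder_clusterApprox [CompleteSpace X] [Nonempty X] (hd : DenseRange d)
    (hu : IsCompact (closure (range u))) :
    MapClusterPt (limUnder atTop (clusterApprox d u)) atTop u :=
  mapClusterPt_of_frequently_dist_le cauchySeq_clusterApprox.tendsto_limUnder
    (tendsto_pow_atTop_nhds_zero_of_lt_one (by norm_num) (by norm_num)) fun n =>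
      Nat.frequently_atTop_iff_infinite.2 <|
        (clusterState_snd_infinite hd hu (n + 1)).mono fun _ => dist_clusterApprox_le

end Centers

section Measurability

variable {X α : Type*} [PseudoMetricSpace X] [MeasurableSpace X] [OpensMeasurableSpace X]
  [MeasurableSpace α] {d : ℕ → X} {r : ℝ} {u : α → ℕ → X} {p : α → ℕ × Set ℕ}

theorem measurable_inter_preimage_closedBall {S : α → Set ℕ} (hu : Measurable u)
    (hS : Measurable S) (k : ℕ) : Measurable fun a => S a ∩ u a ⁻¹' closedBall (d k) r :=
  measurable_set_iff.2 fun i =>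
    ((measurable_set_mem i).comp hS).and
      (measurableSet_closedBall.mem.comp ((measurable_pi_apply i).comp hu))

open Classical in
theorem measurable_refineStep (hu : Measurable u) (hp : Measurable p) :
    Measurable fun a => refineStep d r (u a) (p a) := by
  have hball := measurable_inter_preimage_closedBall (d := d) (r := r) hu hp.snd
  have hinf (k : ℕ) : Measurable fun a => ((p a).2 ∩ u a ⁻¹' closedBall (d k) r).Infinite :=
    measurableSet_setOfPred.1 (hball k MeasurableSet.setOfPred_infinite)
  exact Measurable.find (f := fun k a => shrink d r (u a) k (p a))
    (fun k => .ite (hinf k).setOf (measurable_const.prodMk (hball k))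
      (hp.fst.prodMk measurable_const))
    (fun k => ((hinf k).or (.forall fun j => (hinf j).not)).setOf)
    fun a => exists_infinite_or_forall_not_infinite d r (u a) (p a).2

variable (d) in
theorem measurable_clusterApprox (n : ℕ) :
    Measurable fun u : ℕ → X => clusterApprox d u n := by
  have hstate (n : ℕ) : Measurable fun u : ℕ → X => clusterState d u n := by
    induction n with
    | zero => exact measurable_const
    | succ n ih => exact measurable_refineStep measurable_id ih
  exact measurable_from_nat.comp (hstate (n + 1)).fst

end Measurability

end LimitPointSelection

open LimitPointSelection

theorem measurable_limit_point_selection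
    {X : Type*} [MetricSpace X] [CompleteSpace X] [TopologicalSpace.SeparableSpace X]
    [MeasurableSpace X] [BorelSpace X] :
    ∃ ℓ : (ℕ → X) → X, Measurable ℓ ∧
      ∀ u : ℕ → X, IsCompact (closure (Set.range u)) →
        MapClusterPt (ℓ u) Filter.atTop u := by
  rcases isEmpty_or_nonempty X with hX | hX
  · exact ⟨fun u => u 0, measurable_pi_apply 0, fun u _ => isEmptyElim (u 0)⟩
  refine ⟨fun u => limUnder atTop (clusterApprox (TopologicalSpace.denseSeq X) u), ?_,
    fun u hu => mapClusterPt_limUnder_clusterApprox (TopologicalSpace.denseRange_denseSeq X) hu⟩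
  exact measurable_of_tendsto_metrizable (measurable_clusterApprox _)
    (tendsto_pi_nhds.2 fun u => cauchySeq_clusterApprox.tendsto_limUnder)
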